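/- The derivative of the inverse Black-Scholes function in the price variable satisfies (BS⁻¹)'(k,u) = 1 / ((∂BS/∂σ)(k, BS⁻¹(k,u))) = 1 / (e^{x} N'(d1(k, BS⁻¹(k,u))) √(T-t)), for u in the interior of the range of σ ↦ BS(k,σ). -/

import Mathlib

open MeasureTheory Real Filter Topology

/-- Standard normal density N'. -/
noncomputable def normPdf (z : ℝ) : ℝ := Real.exp (-z ^ 2 / 2) / Real.sqrt (2 * Real.pi)

/-- Standard normal CDF N. -/
noncomputable def normCdf (z : ℝ) : ℝ := ∫ u in Set.Iic z, normPdf u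

/-- Black-Scholes d1. -/
noncomputable def bsD1 (t T x k σ : ℝ) : ℝ :=
  (x - k) / (σ * Real.sqrt (T - t)) + σ / 2 * Real.sqrt (T - t)

/-- Black-Scholes d2. -/
noncomputable def bsD2 (t T x k σ : ℝ) : ℝ :=
  (x - k) / (σ * Real.sqrt (T - t)) - σ / 2 * Real.sqrt (T - t)

/-- Zero-rate Black-Scholes call price. -/
noncomputable def bsPrice (t T x k σ : ℝ) : ℝ :=
  Real.exp x * normCdf (bsD1 t T x k σ) - Real.exp k * normCdf (bsD2 t T x k σ)

lemma normPdf_pos (z : ℝ) : 0 < normPdf z :=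
  div_pos (Real.exp_pos _) (Real.sqrt_pos.2 (by positivity))

lemma continuous_normPdf : Continuous normPdf := by
  unfold normPdf; fun_prop

lemma integrable_normPdf : Integrable normPdf := by
  have h : Integrable (fun z : ℝ => Real.exp (-(1/2 : ℝ) * z ^ 2)) :=
    integrable_exp_neg_mul_sq (by norm_num)
  have : normPdf = fun z => (Real.sqrt (2 * Real.pi))⁻¹ * Real.exp (-(1/2 : ℝ) * z ^ 2) := by
    funext z; unfold normPdf; rw [div_eq_inv_mul]; ring_nf
  rw [this]
  exact h.const_mul _

lemma hasDerivAt_normCdf (z : ℝ) : HasDerivAt normCdf (normPdf z) z := by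
  have key : ∀ w : ℝ, normCdf w = normCdf 0 + ∫ u in (0:ℝ)..w, normPdf u := by
    intro w
    rw [← intervalIntegral.integral_Iic_sub_Iic (integrable_normPdf.integrableOn)
      (integrable_normPdf.integrableOn)]
    unfold normCdf; ring
  have h : HasDerivAt (fun w => normCdf 0 + ∫ u in (0:ℝ)..w, normPdf u) (normPdf z) z := by
    have h2 : HasDerivAt (fun u => ∫ x in (0:ℝ)..u, normPdf x) (normPdf z) z :=
      intervalIntegral.integral_hasDerivAt_right
        (integrable_normPdf.intervalIntegrable)
        (continuous_normPdf.stronglyMeasurable.stronglyMeasurableAtFilter)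
        continuous_normPdf.continuousAt
    have h3 := (hasDerivAt_const z (normCdf 0)).add h2
    rw [zero_add] at h3
    exact h3
  exact h.congr_of_eventuallyEq (Eventually.of_forall fun w => key w)

lemma bs_key_identity (t T x k σ : ℝ) (ht : t < T) (hσ : 0 < σ) :
    Real.exp x * normPdf (bsD1 t T x k σ) = Real.exp k * normPdf (bsD2 t T x k σ) := by
  have hτ : 0 < Real.sqrt (T - t) := Real.sqrt_pos.2 (by linarith)
  unfold normPdf bsD1 bsD2
  rw [mul_div_assoc', mul_div_assoc', ← Real.exp_add, ← Real.exp_add]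
  congr 2
  field_simp
  ring

lemma hasDerivAt_bsPrice (t T x k σ : ℝ) (ht : t < T) (hσ : 0 < σ) :
    HasDerivAt (fun σ => bsPrice t T x k σ)
      (Real.exp x * normPdf (bsD1 t T x k σ) * Real.sqrt (T - t)) σ := by
  set τ := Real.sqrt (T - t) with hτdef
  have hτ : 0 < τ := Real.sqrt_pos.2 (by linarith)
  have hστ : σ * τ ≠ 0 := by positivity
  have hd0 : HasDerivAt (fun σ : ℝ => (x - k) / (σ * τ))
      ((0 * (σ * τ) - (x - k) * (1 * τ)) / (σ * τ) ^ 2) σ :=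
    (hasDerivAt_const σ (x - k)).div ((hasDerivAt_id σ).mul_const τ) hστ
  have hlin : HasDerivAt (fun σ : ℝ => σ / 2 * τ) (1 / 2 * τ) σ := by
    simpa using (((hasDerivAt_id σ).div_const 2).mul_const τ)
  set A : ℝ := (0 * (σ * τ) - (x - k) * (1 * τ)) / (σ * τ) ^ 2 with hA
  have hd1 : HasDerivAt (fun σ => bsD1 t T x k σ) (A + 1 / 2 * τ) σ := hd0.add hlin
  have hd2 : HasDerivAt (fun σ => bsD2 t T x k σ) (A - 1 / 2 * τ) σ := hd0.sub hlin
  have h1 : HasDerivAt (fun σ => normCdf (bsD1 t T x k σ))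
      (normPdf (bsD1 t T x k σ) * (A + 1 / 2 * τ)) σ :=
    (hasDerivAt_normCdf _).comp σ hd1
  have h2 : HasDerivAt (fun σ => normCdf (bsD2 t T x k σ))
      (normPdf (bsD2 t T x k σ) * (A - 1 / 2 * τ)) σ :=
    (hasDerivAt_normCdf _).comp σ hd2
  have h : HasDerivAt (fun σ => bsPrice t T x k σ)
      (Real.exp x * (normPdf (bsD1 t T x k σ) * (A + 1 / 2 * τ)) -
        Real.exp k * (normPdf (bsD2 t T x k σ) * (A - 1 / 2 * τ))) σ :=
    (h1.const_mul _).sub (h2.const_mul _)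
  have key := bs_key_identity t T x k σ ht hσ
  have heq : Real.exp x * (normPdf (bsD1 t T x k σ) * (A + 1 / 2 * τ)) -
      Real.exp k * (normPdf (bsD2 t T x k σ) * (A - 1 / 2 * τ)) =
      Real.exp x * normPdf (bsD1 t T x k σ) * τ := by
    linear_combination (A - 1 / 2 * τ) * key
  rwa [heq] at h

lemma bs_strictMonoOn (t T x k : ℝ) (ht : t < T) :
    StrictMonoOn (fun σ => bsPrice t T x k σ) (Set.Ioi 0) := by
  have hτ : 0 < Real.sqrt (T - t) := Real.sqrt_pos.2 (by linarith)
  refine strictMonoOn_of_hasDerivWithinAt_pos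
    (f' := fun σ => Real.exp x * normPdf (bsD1 t T x k σ) * Real.sqrt (T - t)) (convex_Ioi 0)
    (fun σ hσ => ((hasDerivAt_bsPrice t T x k σ ht hσ).continuousAt).continuousWithinAt)
    (fun σ hσ => ?_) (fun σ hσ => ?_)
  · rw [interior_Ioi] at hσ
    exact (hasDerivAt_bsPrice t T x k σ ht hσ).hasDerivWithinAt
  · rw [interior_Ioi] at hσ
    have := normPdf_pos (bsD1 t T x k σ)
    positivity

/-- Derivative of the inverse Black-Scholes function:
(BS⁻¹)'(k,u) = 1 / (eˣ N'(d1(k, BS⁻¹(k,u))) √(T-t)). -/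
theorem bs_inv_deriv (t T x k : ℝ) (ht : t < T) (inv : ℝ → ℝ)
    (hleft : ∀ σ > (0:ℝ), inv (bsPrice t T x k σ) = σ)
    (hright : ∀ u ∈ interior ((fun σ => bsPrice t T x k σ) '' Set.Ioi 0),
      bsPrice t T x k (inv u) = u) :
    ∀ u ∈ interior ((fun σ => bsPrice t T x k σ) '' Set.Ioi 0),
      HasDerivAt inv
        (1 / (Real.exp x * normPdf (bsD1 t T x k (inv u)) * Real.sqrt (T - t))) u := by
  intro u hu
  set f : ℝ → ℝ := fun σ => bsPrice t T x k σ with hf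
  set S := interior (f '' Set.Ioi 0) with hS
  have hSopen : IsOpen S := isOpen_interior
  have hmono := bs_strictMonoOn t T x k ht
  have hτ : 0 < Real.sqrt (T - t) := Real.sqrt_pos.2 (by linarith)
  -- every point of S has positive, canonical preimage
  have hinv_mem : ∀ y ∈ S, inv y ∈ Set.Ioi (0:ℝ) ∧ f (inv y) = y := by
    intro y hy
    obtain ⟨σ, hσ, hσy⟩ := interior_subset hy
    have : inv y = σ := by rw [← hσy]; exact hleft σ hσ
    exact ⟨this ▸ hσ, hright y hy⟩
  have hinvu_pos : (0:ℝ) < inv u := (hinv_mem u hu).1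
  -- continuity of inv at u
  have hmono_inv : StrictMonoOn inv S := by
    intro y1 h1 y2 h2 h12
    obtain ⟨hp1, hf1⟩ := hinv_mem y1 h1
    obtain ⟨hp2, hf2⟩ := hinv_mem y2 h2
    by_contra hle
    push_neg at hle
    rcases eq_or_lt_of_le hle with heq | hlt
    · have : y1 = y2 := by rw [← hf1, ← hf2, heq]
      exact absurd this (ne_of_lt h12)
    · have : y2 < y1 := by rw [← hf1, ← hf2]; exact hmono hp2 hp1 hlt
      exact absurd this (not_lt_of_gt h12)
  have himg : inv '' S ∈ 𝓝 (inv u) := by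
    have hcf : ContinuousOn f (Set.Ioi 0) := fun σ hσ =>
      ((hasDerivAt_bsPrice t T x k σ ht hσ).continuousAt).continuousWithinAt
    have hopen : IsOpen (Set.Ioi (0:ℝ) ∩ f ⁻¹' S) :=
      hcf.isOpen_inter_preimage isOpen_Ioi hSopen
    have hsub : Set.Ioi (0:ℝ) ∩ f ⁻¹' S ⊆ inv '' S := by
      rintro σ ⟨hσ, hfσ⟩
      exact ⟨f σ, hfσ, hleft σ hσ⟩
    have hmem : inv u ∈ Set.Ioi (0:ℝ) ∩ f ⁻¹' S :=
      ⟨hinvu_pos, by rw [Set.mem_preimage, (hinv_mem u hu).2]; exact hu⟩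
    exact Filter.mem_of_superset (hopen.mem_nhds hmem) hsub
  have hcont : ContinuousAt inv u :=
    hmono_inv.continuousAt_of_image_mem_nhds (hSopen.mem_nhds hu) himg
  have hfg : ∀ᶠ y in 𝓝 u, f (inv y) = y :=
    eventually_of_mem (hSopen.mem_nhds hu) (fun y hy => hright y hy)
  have hderiv : HasDerivAt f
      (Real.exp x * normPdf (bsD1 t T x k (inv u)) * Real.sqrt (T - t)) (inv u) :=
    hasDerivAt_bsPrice t T x k (inv u) ht hinvu_pos
  have hne : Real.exp x * normPdf (bsD1 t T x k (inv u)) * Real.sqrt (T - t) ≠ 0 := by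
    have := normPdf_pos (bsD1 t T x k (inv u)); positivity
  have := hderiv.of_local_left_inverse hcont hne hfg
  rwa [one_div]
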